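/- Let T = a_0 I + a_1 D + ... + a_n D^n be an invertible operator in 𝒟(P_n) (a_0 ≠ 0) and let γ_1, ..., γ_n be the roots, with multiplicity, of a_0 zⁿ + a_1 z^{n−1} + ... + a_n. Then K_h(T) ≤ n (|γ_1| + ... + |γ_n|), i.e., for every nonconstant f ∈ P_n and every root v of Tf there exists a root u of f with |v − u| ≤ n(|γ_1| + ... + |γ_n|). -/

import Mathlib

/-!
Reflecting the identity `∑ aₖ z^(n-k) = a₀ ∏ (z - γⱼ)` gives `∑ aₖ zᵏ = a₀ ∏ (1 - γⱼ z)`, so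
`T = a₀ ∏ (I - γⱼ D)` and it suffices to control one factor `I - γ D`, which preserves degrees.
If `g(v) = γ g'(v)` with `g(v) ≠ 0`, then `1 = γ ∑ 1 / (v - z)` over the roots `z` of `g`, so the
root `u` nearest to `v` satisfies `|v - u| ≤ deg g · |γ|`. Chaining the `n` factors with the
triangle inequality gives `|v - u| ≤ deg f · ∑ |γⱼ| ≤ n ∑ |γⱼ|`.
-/

open Polynomial

/-- `P n` is the space of complex polynomials of degree at most `n`. -/
noncomputable def Pn (n : ℕ) : Submodule ℂ (Polynomial ℂ) := Polynomial.degreeLT ℂ (n + 1)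

noncomputable instance instPnEndAddCommGroup (n : ℕ) : AddCommGroup (Module.End ℂ (Pn n)) :=
  LinearMap.addCommGroup

noncomputable instance instPnEndRing (n : ℕ) : Ring (Module.End ℂ (Pn n)) := Module.End.instRing

/-- The differentiation operator on `Pn n`. -/
noncomputable def Dop (n : ℕ) : Module.End ℂ (Pn n) :=
  (Polynomial.derivative (R := ℂ)).restrict (p := Pn n) (q := Pn n)
    (fun f hf => by
      simp only [Pn, Polynomial.mem_degreeLT] at *
      exact lt_of_le_of_lt (Polynomial.degree_derivative_le) hf)

/-- `calD n` is the span of `I, D, D^2, ..., D^n` in `L(Pn n)`. -/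
noncomputable def calD (n : ℕ) : Submodule ℂ (Module.End ℂ (Pn n)) :=
  Submodule.span ℂ (Set.range fun k : Fin (n + 1) => (Dop n) ^ (k : ℕ))

section CommRing

variable {R : Type*} [CommRing R]

theorem reflect_sum {ι : Type*} (N : ℕ) (s : Finset ι) (f : ι → R[X]) :
    reflect N (∑ i ∈ s, f i) = ∑ i ∈ s, reflect N (f i) :=
  let φ : R[X] →+ R[X] :=
    { toFun := reflect N, map_zero' := reflect_zero, map_add' := fun p q ↦ reflect_add p q N }
  map_sum φ f s

theorem reflect_prod_X_sub_C {ι : Type*} (s : Finset ι) (γ : ι → R) :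
    reflect s.card (∏ j ∈ s, (X - C (γ j))) = ∏ j ∈ s, (1 - C (γ j) * X) := by
  classical
  induction s using Finset.induction_on with
  | empty => simp
  | insert i s hi ih =>
    have hdeg : (∏ j ∈ s, (X - C (γ j))).natDegree ≤ s.card :=
      (natDegree_prod_le _ _).trans <| by
        simpa using Finset.sum_le_sum fun j _ ↦ natDegree_X_sub_C_le (γ j)
    rw [Finset.prod_insert hi, Finset.prod_insert hi, Finset.card_insert_of_notMem hi, add_comm,
      reflect_mul _ _ (natDegree_X_sub_C_le _) hdeg, ih]
    simp [reflect_sub, reflect_C]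

theorem reflect_sum_C_mul_X_pow_sub (n : ℕ) (a : Fin (n + 1) → R) :
    reflect n (∑ k : Fin (n + 1), C (a k) * X ^ (n - (k : ℕ))) =
      ∑ k : Fin (n + 1), C (a k) * X ^ (k : ℕ) := by
  rw [reflect_sum]
  exact Finset.sum_congr rfl fun k _ ↦ by simp [revAt_le, Nat.sub_sub_self k.is_le]

theorem degree_sub_smul_derivative (g : R[X]) (c : R) :
    (g - c • derivative g).degree = g.degree := by
  rcases eq_or_ne g 0 with rfl | hg
  · simp
  exact degree_sub_eq_left_of_degree_lt ((degree_smul_le _ _).trans_lt (degree_derivative_lt hg))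

theorem aeval_derivative_one_sub_C_mul_X_apply (c : R) (g : R[X]) :
    aeval (derivative : R[X] →ₗ[R] R[X]) (1 - C c * X) g = g - c • derivative g := by
  simp [Module.algebraMap_end_eq_smul_id]

theorem degree_aeval_derivative_prod_one_sub_C_mul_X_apply {ι : Type*} (s : Finset ι)
    (γ : ι → R) (g : R[X]) :
    (aeval (derivative : R[X] →ₗ[R] R[X]) (∏ j ∈ s, (1 - C (γ j) * X)) g).degree = g.degree := by
  classical
  induction s using Finset.induction_on with
  | empty => simp
  | insert i s hi ih =>
    rw [Finset.prod_insert hi, map_mul, Module.End.mul_apply,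
      aeval_derivative_one_sub_C_mul_X_apply, degree_sub_smul_derivative, ih]

end CommRing

section NearestRoot

variable {K : Type*} [NormedField K]

theorem norm_eval_derivative_mul_norm_sub_le {g : K[X]} (hg : g.Splits) {x u : K}
    (hu : u ∈ g.roots) (hu_min : ∀ z ∈ g.roots, ‖x - u‖ ≤ ‖x - z‖) :
    ‖(derivative g).eval x‖ * ‖x - u‖ ≤ g.natDegree * ‖g.eval x‖ := by
  by_cases hx : g.eval x = 0
  · have hxu : ‖x - u‖ = 0 := by
      simpa using hu_min x ((mem_roots (ne_zero_of_mem_roots hu)).2 hx)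
    rw [hxu, mul_zero]; positivity
  have hsum : ‖(g.roots.map fun z ↦ 1 / (x - z)).sum‖ * ‖x - u‖ ≤ g.roots.card := by
    calc ‖(g.roots.map fun z ↦ 1 / (x - z)).sum‖ * ‖x - u‖
        ≤ (g.roots.map fun z ↦ ‖x - u‖ / ‖x - z‖).sum := by
          grw [norm_multiset_sum_le, ← Multiset.sum_map_mul_right, Multiset.map_map]
          simp [div_eq_inv_mul]
      _ ≤ (g.roots.map fun _ ↦ (1 : ℝ)).sum :=
          Multiset.sum_map_le_sum_map _ _ fun z hz ↦ div_le_one_of_le₀ (hu_min z hz) (norm_nonneg _)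
      _ = g.roots.card := by simp
  calc ‖(derivative g).eval x‖ * ‖x - u‖
      = ‖g.eval x‖ * (‖(g.roots.map fun z ↦ 1 / (x - z)).sum‖ * ‖x - u‖) := by
        rw [hg.eval_derivative_eq_eval_mul_sum hx, norm_mul, mul_assoc]
    _ ≤ ‖g.eval x‖ * g.natDegree := by
        grw [hsum, card_roots' g]
    _ = g.natDegree * ‖g.eval x‖ := mul_comm _ _

theorem exists_isRoot_norm_sub_le_of_isRoot_sub_smul_derivative [IsAlgClosed K] {g : K[X]}
    (hg : 0 < g.degree) (c : K) {v : K} (hv : (g - c • derivative g).IsRoot v) :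
    ∃ u, g.IsRoot u ∧ ‖v - u‖ ≤ g.natDegree * ‖c‖ := by
  classical
  by_cases hgv : g.IsRoot v
  · exact ⟨v, hgv, by rw [sub_self, norm_zero]; positivity⟩
  have hg0 : g ≠ 0 := ne_zero_of_degree_gt hg
  obtain ⟨z, hz⟩ := IsAlgClosed.exists_root g hg.ne'
  obtain ⟨u, hu, hu_min⟩ := g.roots.toFinset.exists_min_image (fun r ↦ ‖v - r‖)
    ⟨z, by simpa [hg0] using hz⟩
  rw [Multiset.mem_toFinset] at hu
  refine ⟨u, (mem_roots hg0).1 hu, ?_⟩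
  have hv' : g.eval v = c * (derivative g).eval v := by
    simpa [sub_eq_zero] using hv
  have hnear := norm_eval_derivative_mul_norm_sub_le (IsAlgClosed.splits g) hu
    fun z hz ↦ hu_min z (Multiset.mem_toFinset.2 hz)
  refine le_of_mul_le_mul_left ?_ (norm_pos_iff.2 hgv)
  calc ‖g.eval v‖ * ‖v - u‖ = ‖c‖ * (‖(derivative g).eval v‖ * ‖v - u‖) := by
        rw [hv', norm_mul, mul_assoc]
    _ ≤ ‖c‖ * (g.natDegree * ‖g.eval v‖) := by gcongr
    _ = ‖g.eval v‖ * (g.natDegree * ‖c‖) := by ring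

theorem exists_isRoot_norm_sub_le_of_isRoot_aeval_derivative_prod [IsAlgClosed K] {ι : Type*}
    (s : Finset ι) (γ : ι → K) {g : K[X]} (hg : 0 < g.degree) {v : K}
    (hv : (aeval (derivative : K[X] →ₗ[K] K[X]) (∏ j ∈ s, (1 - C (γ j) * X)) g).IsRoot v) :
    ∃ u, g.IsRoot u ∧ ‖v - u‖ ≤ g.natDegree * ∑ j ∈ s, ‖γ j‖ := by
  classical
  induction s using Finset.induction_on generalizing v with
  | empty => exact ⟨v, by simpa using hv, by simp⟩
  | insert i s hi ih =>
    set h := aeval (derivative : K[X] →ₗ[K] K[X]) (∏ j ∈ s, (1 - C (γ j) * X)) g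
    have hdeg : h.degree = g.degree := degree_aeval_derivative_prod_one_sub_C_mul_X_apply s γ g
    rw [Finset.prod_insert hi, map_mul, Module.End.mul_apply,
      aeval_derivative_one_sub_C_mul_X_apply] at hv
    obtain ⟨w, hw, hvw⟩ :=
      exists_isRoot_norm_sub_le_of_isRoot_sub_smul_derivative (hdeg ▸ hg) (γ i) hv
    obtain ⟨u, hu, hwu⟩ := ih hw
    refine ⟨u, hu, ?_⟩
    rw [natDegree_eq_natDegree hdeg] at hvw
    calc ‖v - u‖ ≤ ‖v - w‖ + ‖w - u‖ := norm_sub_le_norm_sub_add_norm_sub v w u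
      _ ≤ g.natDegree * ‖γ i‖ + g.natDegree * ∑ j ∈ s, ‖γ j‖ := add_le_add hvw hwu
      _ = g.natDegree * ∑ j ∈ insert i s, ‖γ j‖ := by rw [Finset.sum_insert hi, mul_add]

end NearestRoot

theorem natDegree_le_of_mem_Pn {n : ℕ} (f : Pn n) : (f : ℂ[X]).natDegree ≤ n := by
  have hf : (f : ℂ[X]) ∈ degreeLE ℂ n := by
    rw [← degreeLT_succ_eq_degreeLE]; exact f.2
  exact natDegree_le_iff_degree_le.2 (mem_degreeLE.1 hf)

theorem coe_Dop_pow_apply (n k : ℕ) (f : Pn n) :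
    (((Dop n ^ k) f : Pn n) : ℂ[X]) = (derivative ^ k : Module.End ℂ ℂ[X]) f := by
  rw [Dop, Module.End.pow_restrict]
  rfl

theorem coe_sum_smul_Dop_pow_apply (n : ℕ) (a : Fin (n + 1) → ℂ) (f : Pn n) :
    (((∑ k : Fin (n + 1), a k • Dop n ^ (k : ℕ)) f : Pn n) : ℂ[X]) =
      aeval (derivative : ℂ[X] →ₗ[ℂ] ℂ[X]) (∑ k : Fin (n + 1), C (a k) * X ^ (k : ℕ)) f := by
  simp [coe_Dop_pow_apply, Module.algebraMap_end_eq_smul_id]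

theorem Kh_le_n_sum_abs_roots_general (n : ℕ) (a : Fin (n + 1) → ℂ) (ha : a 0 ≠ 0)
    (γ : Fin n → ℂ)
    (hroots : (∑ k : Fin (n + 1), Polynomial.C (a k) * Polynomial.X ^ (n - (k : ℕ))) =
      Polynomial.C (a 0) * ∏ j : Fin n, (Polynomial.X - Polynomial.C (γ j)))
    (T : Module.End ℂ (Pn n)) (hT : T = ∑ k : Fin (n + 1), a k • (Dop n) ^ (k : ℕ)) :
    ∀ f : Pn n, 0 < (f : Polynomial ℂ).degree →
      ∀ v, ((T f : Pn n) : Polynomial ℂ).IsRoot v →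
        ∃ u, (f : Polynomial ℂ).IsRoot u ∧
          ‖v - u‖ ≤ (n : ℝ) * ∑ j : Fin n, ‖γ j‖ := by
  intro f hf v hv
  have hrev : ∑ k : Fin (n + 1), C (a k) * X ^ (k : ℕ) =
      C (a 0) * ∏ j : Fin n, (1 - C (γ j) * X) := by
    simpa [reflect_sum_C_mul_X_pow_sub, reflect_C_mul, ← reflect_prod_X_sub_C]
      using congrArg (reflect n) hroots
  set P : ℂ[X] := ∏ j : Fin n, (1 - C (γ j) * X)
  have hTf : (T f : ℂ[X]) = a 0 • aeval (derivative : ℂ[X] →ₗ[ℂ] ℂ[X]) P f := by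
    rw [hT, coe_sum_smul_Dop_pow_apply, hrev, map_mul, aeval_C, Module.End.mul_apply,
      Module.algebraMap_end_apply]
  have hv' : (aeval (derivative : ℂ[X] →ₗ[ℂ] ℂ[X]) P f).IsRoot v := by
    simpa [hTf, ha] using hv
  obtain ⟨u, hu, hvu⟩ := exists_isRoot_norm_sub_le_of_isRoot_aeval_derivative_prod _ γ hf hv'
  exact ⟨u, hu, hvu.trans (by gcongr; exact natDegree_le_of_mem_Pn f)⟩

/-- Let `T = a_0 I + a_1 D + ⋯ + a_n Dⁿ` be invertible in `𝒟(P_n)` (`a_0 ≠ 0`) and let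
`γ_1, …, γ_n` be the roots, with multiplicity, of `a_0 zⁿ + a_1 z^{n-1} + ⋯ + a_n`.
Then `K_h(T) ≤ n(|γ_1| + ⋯ + |γ_n|)`: for every nonconstant `f ∈ P_n` and every root
`v` of `Tf` there is a root `u` of `f` with `|v - u| ≤ n(|γ_1| + ⋯ + |γ_n|)`. -/
theorem Kh_le_n_sum_abs_roots (n : ℕ) (hn : 0 < n) (a : Fin (n + 1) → ℂ) (ha : a 0 ≠ 0)
    (γ : Fin n → ℂ)
    (hroots : (∑ k : Fin (n + 1), Polynomial.C (a k) * Polynomial.X ^ (n - (k : ℕ))) =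
      Polynomial.C (a 0) * ∏ j : Fin n, (Polynomial.X - Polynomial.C (γ j)))
    (T : Module.End ℂ (Pn n)) (hT : T = ∑ k : Fin (n + 1), a k • (Dop n) ^ (k : ℕ)) :
    ∀ f : Pn n, 0 < (f : Polynomial ℂ).degree →
      ∀ v, ((T f : Pn n) : Polynomial ℂ).IsRoot v →
        ∃ u, (f : Polynomial ℂ).IsRoot u ∧
          ‖v - u‖ ≤ (n : ℝ) * ∑ j : Fin n, ‖γ j‖ :=
  Kh_le_n_sum_abs_roots_general n a ha γ hroots T hT
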